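/- arXiv:2510.27120 — 3 statements merged into one kernel-verified Lean document; each statement's English description precedes it below -/
import Mathlib

section
/- Let f : ℝⁿ → ℝ be continuously differentiable with Lipschitz continuous gradient, let T > 0 and x₀ ∈ ℝⁿ, and let x* : [0,T] → ℝⁿ be the solution of the gradient flow ẋ*(t) = −∇f(x*(t)), x*(0) = x₀. Then for every continuously differentiable path x : [0,T] → ℝⁿ with x(0) = x₀ one has J(x) ≥ J(x*) = f(x₀), where J(x) = ∫₀ᵀ ( (1/2)‖∇f(x(t))‖² + (1/2)‖ẋ(t)‖² ) dt + f(x(T)). In particular, the gradient flow is the optimal evolution for the calculus of variations problem of minimizing J over C¹ paths starting at x₀ with control u = ẋ. -/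
open MeasureTheory Real intervalIntegral

/-- The action functional `J(x, x') = ∫₀ᵀ ((1/2)‖∇f(x t)‖² + (1/2)‖x' t‖²) dt + f (x T)`
of the gradient-descent optimal control problem, with control `u = x'`. -/
noncomputable def gdAction {n : ℕ} (f : EuclideanSpace ℝ (Fin n) → ℝ) (T : ℝ)
    (x x' : ℝ → EuclideanSpace ℝ (Fin n)) : ℝ :=
  (∫ t in (0 : ℝ)..T, ((1 / 2) * ‖gradient f (x t)‖ ^ 2 + (1 / 2) * ‖x' t‖ ^ 2)) + f (x T)

/-! Completing the square, `½‖∇f(y)‖² + ½‖y'‖² = ½‖∇f(y) + y'‖² - ⟪∇f(y), y'⟫`, and the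
chain rule `(f ∘ y)' = ⟪∇f(y), y'⟫` give `J(y) = f(y 0) + ∫₀ᵀ ½‖∇f(y) + y'‖²`. The integral is
nonnegative and vanishes exactly along the gradient flow `y' = -∇f(y)`. -/

section Hilbert

open scoped RealInnerProductSpace

variable {E : Type*} [NormedAddCommGroup E] [InnerProductSpace ℝ E] [CompleteSpace E]

theorem ContDiff.continuous_gradient {f : E → ℝ} (hf : ContDiff ℝ 1 f) :
    Continuous (gradient f) :=
  (InnerProductSpace.toDual ℝ E).symm.continuous.comp (hf.continuous_fderiv one_ne_zero)

theorem HasGradientAt.hasDerivAt_comp {f : E → ℝ} {g : E} {y : ℝ → E} {v : E} {t : ℝ}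
    (hf : HasGradientAt f g (y t)) (hy : HasDerivAt y v t) :
    HasDerivAt (fun s => f (y s)) ⟪g, v⟫ t :=
  hf.hasFDerivAt.comp_hasDerivAt t hy

theorem integral_inner_gradient_eq_sub {f : E → ℝ} (hf : ContDiff ℝ 1 f) {a b : ℝ}
    {y y' : ℝ → E} (hy : ∀ t ∈ Set.uIcc a b, HasDerivAt y (y' t) t)
    (hy' : ContinuousOn y' (Set.uIcc a b)) :
    ∫ t in a..b, ⟪gradient f (y t), y' t⟫ = f (y b) - f (y a) := by
  have hyc : ContinuousOn y (Set.uIcc a b) := HasDerivAt.continuousOn hy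
  refine integral_eq_sub_of_hasDerivAt (f := fun s => f (y s)) (fun t ht => ?_) ?_
  · exact ((hf.differentiable one_ne_zero) (y t)).hasGradientAt.hasDerivAt_comp (hy t ht)
  · exact ((hf.continuous_gradient.comp_continuousOn hyc).inner hy').intervalIntegrable

theorem integral_half_norm_sq_gradient_add {f : E → ℝ} (hf : ContDiff ℝ 1 f) {a b : ℝ}
    {y y' : ℝ → E} (hy : ∀ t ∈ Set.uIcc a b, HasDerivAt y (y' t) t)
    (hy' : ContinuousOn y' (Set.uIcc a b)) :
    ∫ t in a..b, (1 / 2) * ‖gradient f (y t) + y' t‖ ^ 2 =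
      (∫ t in a..b, ((1 / 2) * ‖gradient f (y t)‖ ^ 2 + (1 / 2) * ‖y' t‖ ^ 2))
        + (f (y b) - f (y a)) := by
  have hgc : ContinuousOn (fun t => gradient f (y t)) (Set.uIcc a b) :=
    hf.continuous_gradient.comp_continuousOn (HasDerivAt.continuousOn hy)
  have hint : IntervalIntegrable
      (fun t => (1 / 2) * ‖gradient f (y t)‖ ^ 2 + (1 / 2) * ‖y' t‖ ^ 2) volume a b :=
    (((hgc.norm.pow 2).const_smul (1 / 2 : ℝ)).add
      ((hy'.norm.pow 2).const_smul (1 / 2 : ℝ))).intervalIntegrable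
  rw [← integral_inner_gradient_eq_sub hf hy hy', ← integral_add hint
    ((hgc.inner hy').intervalIntegrable)]
  refine integral_congr fun t _ => ?_
  simp only [norm_add_sq_real]
  ring

end Hilbert

section Euclidean

variable {n : ℕ} {f : EuclideanSpace ℝ (Fin n) → ℝ} {T : ℝ}

theorem gdAction_eq_integral_add (hf : ContDiff ℝ 1 f) (hT : 0 ≤ T)
    {y y' : ℝ → EuclideanSpace ℝ (Fin n)}
    (hy : ∀ t ∈ Set.Icc (0 : ℝ) T, HasDerivAt y (y' t) t)
    (hy' : ContinuousOn y' (Set.Icc (0 : ℝ) T)) :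
    gdAction f T y y' =
      (∫ t in (0 : ℝ)..T, (1 / 2) * ‖gradient f (y t) + y' t‖ ^ 2) + f (y 0) := by
  rw [← Set.uIcc_of_le hT] at hy hy'
  rw [integral_half_norm_sq_gradient_add hf hy hy', gdAction]
  ring

theorem le_gdAction (hf : ContDiff ℝ 1 f) (hT : 0 ≤ T)
    {y y' : ℝ → EuclideanSpace ℝ (Fin n)}
    (hy : ∀ t ∈ Set.Icc (0 : ℝ) T, HasDerivAt y (y' t) t)
    (hy' : ContinuousOn y' (Set.Icc (0 : ℝ) T)) :
    f (y 0) ≤ gdAction f T y y' := by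
  rw [gdAction_eq_integral_add hf hT hy hy']
  exact le_add_of_nonneg_left (integral_nonneg hT fun t _ => by positivity)

theorem gdAction_gradient_flow (hf : ContDiff ℝ 1 f) (hT : 0 ≤ T)
    {y : ℝ → EuclideanSpace ℝ (Fin n)}
    (hy : ∀ t ∈ Set.Icc (0 : ℝ) T, HasDerivAt y (-(gradient f (y t))) t) :
    gdAction f T y (fun t => -(gradient f (y t))) = f (y 0) := by
  have hy' : ContinuousOn (fun t => -(gradient f (y t))) (Set.Icc (0 : ℝ) T) :=
    (hf.continuous_gradient.comp_continuousOn (HasDerivAt.continuousOn hy)).neg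
  simp [gdAction_eq_integral_add hf hT hy hy']

end Euclidean

theorem gradient_flow_optimal_general {n : ℕ}
    (f : EuclideanSpace ℝ (Fin n) → ℝ) (hf : ContDiff ℝ 1 f)
    (T : ℝ) (hT : 0 < T) (x₀ : EuclideanSpace ℝ (Fin n))
    (xs : ℝ → EuclideanSpace ℝ (Fin n))
    (hxs : ∀ t ∈ Set.Icc (0 : ℝ) T, HasDerivAt xs (-(gradient f (xs t))) t)
    (hxs0 : xs 0 = x₀)
    (x x' : ℝ → EuclideanSpace ℝ (Fin n))
    (hx : ∀ t ∈ Set.Icc (0 : ℝ) T, HasDerivAt x (x' t) t)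
    (hx' : ContinuousOn x' (Set.Icc (0 : ℝ) T))
    (hx0 : x 0 = x₀) :
    gdAction f T x x' ≥ gdAction f T xs (fun t => -(gradient f (xs t)))
      ∧ gdAction f T xs (fun t => -(gradient f (xs t))) = f x₀ := by
  have hJxs := gdAction_gradient_flow hf hT.le hxs
  rw [hxs0] at hJxs
  refine ⟨?_, hJxs⟩
  rw [hJxs, ← hx0]
  exact le_gdAction hf hT.le hx hx'

/-- Let `f` be `C¹` with Lipschitz gradient, `T > 0`, `x₀ ∈ ℝⁿ`, and let
`x⋆` solve the gradient flow `ẋ⋆ = -∇f(x⋆)`, `x⋆ 0 = x₀`. Then for every `C¹` path `x`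
with `x 0 = x₀` one has `J(x) ≥ J(x⋆)` and `J(x⋆) = f x₀`: the gradient flow is the
optimal evolution of the calculus of variations problem. -/
theorem gradient_flow_optimal {n : ℕ}
    (f : EuclideanSpace ℝ (Fin n) → ℝ) (hf : ContDiff ℝ 1 f)
    (L : NNReal) (hLip : LipschitzWith L (gradient f))
    (T : ℝ) (hT : 0 < T) (x₀ : EuclideanSpace ℝ (Fin n))
    (xs : ℝ → EuclideanSpace ℝ (Fin n))
    (hxs : ∀ t ∈ Set.Icc (0 : ℝ) T, HasDerivAt xs (-(gradient f (xs t))) t)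
    (hxs0 : xs 0 = x₀)
    (x x' : ℝ → EuclideanSpace ℝ (Fin n))
    (hx : ∀ t ∈ Set.Icc (0 : ℝ) T, HasDerivAt x (x' t) t)
    (hx' : ContinuousOn x' (Set.Icc (0 : ℝ) T))
    (hx0 : x 0 = x₀) :
    gdAction f T x x' ≥ gdAction f T xs (fun t => -(gradient f (xs t)))
      ∧ gdAction f T xs (fun t => -(gradient f (xs t))) = f x₀ :=
  gradient_flow_optimal_general f hf T hT x₀ xs hxs hxs0 x x' hx hx' hx0
end

section
/- Let ρ̄ : ℝⁿ → (0,∞) be a smooth strictly positive probability density and ρ₀ a smooth strictly positive probability density on ℝⁿ with D(ρ₀‖ρ̄) finite. Among all pairs (ρ, v) with ρ : [0,1] × ℝⁿ → (0,∞) smooth probability densities, v smooth, satisfying the continuity equation ∂ρ/∂t + ∇·(vρ) = 0, ρ(·,0) = ρ₀, and the regularity/vanishing-boundary hypotheses making the entropy-derivative formula valid, every pair satisfies J(ρ,v) ≥ D(ρ₀‖ρ̄), and if (ρ*, v*) additionally satisfies the gradient-flow relation v*(t,x) = −∇log(ρ*_t(x)/ρ̄(x)), then J(ρ*, v*) = D(ρ₀‖ρ̄).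 Hence the Wasserstein gradient flow of ρ ↦ D(ρ‖ρ̄) solves the fluid-dynamic control problem. -/
open MeasureTheory Real RealInnerProductSpace intervalIntegral

/-- Divergence of a vector field on `ℝⁿ`: `(∇·w)(x) = ∑ᵢ ∂wⁱ/∂xⁱ (x)`. -/
noncomputable def vdiv {n : ℕ} (w : EuclideanSpace ℝ (Fin n) → EuclideanSpace ℝ (Fin n))
    (x : EuclideanSpace ℝ (Fin n)) : ℝ :=
  ∑ i, fderiv ℝ w x (EuclideanSpace.single i 1) i


lemma grad_inner {n : ℕ} (f : EuclideanSpace ℝ (Fin n) → ℝ) (x y : EuclideanSpace ℝ (Fin n)) :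
    ⟪gradient f x, y⟫ = fderiv ℝ f x y := by
  simp [gradient, InnerProductSpace.toDual_symm_apply]

lemma div_prod {n : ℕ} (φ : EuclideanSpace ℝ (Fin n) → ℝ)
    (w : EuclideanSpace ℝ (Fin n) → EuclideanSpace ℝ (Fin n)) (x : EuclideanSpace ℝ (Fin n))
    (hφ : DifferentiableAt ℝ φ x) (hw : DifferentiableAt ℝ w x) :
    vdiv (fun y => φ y • w y) x = ⟪gradient φ x, w x⟫ + φ x * vdiv w x := by
  have hf : fderiv ℝ (fun y => φ y • w y) x
      = φ x • fderiv ℝ w x + (fderiv ℝ φ x).smulRight (w x) := fderiv_smul hφ hw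
  have hin : ⟪gradient φ x, w x⟫ = ∑ i, fderiv ℝ φ x (EuclideanSpace.single i 1) * w x i := by
    simp_rw [← grad_inner]
    simp [PiLp.inner_apply, EuclideanSpace.inner_single_right, mul_comm]
    conv_lhs => rw [← (EuclideanSpace.basisFun (Fin n) ℝ).sum_repr (w x)]
    simp [map_sum, map_smul]
  simp only [vdiv, hf, ContinuousLinearMap.add_apply, ContinuousLinearMap.smul_apply,
    ContinuousLinearMap.smulRight_apply, PiLp.add_apply, PiLp.smul_apply, smul_eq_mul,
    Finset.sum_add_distrib, hin, Finset.mul_sum]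
  ring

/-- Let `ρb` be a smooth strictly positive probability density and `ρ₀`
a smooth strictly positive probability density with `D(ρ₀‖ρb)` finite.  Every admissible
pair `(ρ, v)` — smooth positive probability densities and smooth velocity field satisfying
the continuity equation, `ρ(·,0) = ρ₀`, and the regularity/vanishing-boundary hypotheses —
satisfies `J(ρ,v) ≥ D(ρ₀‖ρb)`, where
`J(ρ,v) = (1/2)∫₀¹∫(‖v‖² + ‖∇log(ρ_t/ρb)‖²)ρ_t dx dt + D(ρ₁‖ρb)`; and if additionally
`v = -∇log(ρ_t/ρb)` (the gradient-flow relation), then `J(ρ,v) = D(ρ₀‖ρb)`.  Hence the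
Wasserstein gradient flow of `ρ ↦ D(ρ‖ρb)` solves the fluid-dynamic control problem. -/
theorem wasserstein_gradient_flow_optimal {n : ℕ}
    (ρb : EuclideanSpace ℝ (Fin n) → ℝ) (hρbs : ContDiff ℝ (⊤ : ℕ∞) ρb)
    (hρbpos : ∀ x, 0 < ρb x) (hρb1 : ∫ x, ρb x = 1)
    (ρ₀ : EuclideanSpace ℝ (Fin n) → ℝ) (hρ₀s : ContDiff ℝ (⊤ : ℕ∞) ρ₀)
    (hρ₀pos : ∀ x, 0 < ρ₀ x) (hρ₀1 : ∫ x, ρ₀ x = 1)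
    (hD0 : Integrable (fun x => ρ₀ x * Real.log (ρ₀ x / ρb x)))
    (ρ : ℝ → EuclideanSpace ℝ (Fin n) → ℝ)
    (hρs : ContDiff ℝ (⊤ : ℕ∞) (fun p : ℝ × EuclideanSpace ℝ (Fin n) => ρ p.1 p.2))
    (hρpos : ∀ t x, 0 < ρ t x) (hρ1 : ∀ t, ∫ x, ρ t x = 1)
    (hinit : ρ 0 = ρ₀)
    (v : ℝ → EuclideanSpace ℝ (Fin n) → EuclideanSpace ℝ (Fin n))
    (hvs : ContDiff ℝ (⊤ : ℕ∞) (fun p : ℝ × EuclideanSpace ℝ (Fin n) => v p.1 p.2))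
    (hce : ∀ t ∈ Set.Icc (0 : ℝ) 1, ∀ x,
      deriv (fun s => ρ s x) t + vdiv (fun y => ρ t y • v t y) x = 0)
    (hDUI : ∀ t ∈ Set.Icc (0 : ℝ) 1,
      HasDerivAt (fun s => ∫ x, ρ s x * Real.log (ρ s x / ρb x))
        (∫ x, deriv (fun s => ρ s x) t * (1 + Real.log (ρ t x / ρb x))) t)
    (hbdry : ∀ t ∈ Set.Icc (0 : ℝ) 1,
      (Integrable (fun x =>
          vdiv (fun y => (1 + Real.log (ρ t y / ρb y)) • (ρ t y • v t y)) x))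
        ∧ ∫ x, vdiv (fun y => (1 + Real.log (ρ t y / ρb y)) • (ρ t y • v t y)) x = 0)
    (hfin₁ : ∀ t ∈ Set.Icc (0 : ℝ) 1, Integrable (fun x => ‖v t x‖ ^ 2 * ρ t x))
    (hfin₂ : ∀ t ∈ Set.Icc (0 : ℝ) 1,
      Integrable (fun x => ‖gradient (fun y => Real.log (ρ t y / ρb y)) x‖ ^ 2 * ρ t x))
    (hfin₃ : IntervalIntegrable (fun t => ∫ x,
        (‖v t x‖ ^ 2 + ‖gradient (fun y => Real.log (ρ t y / ρb y)) x‖ ^ 2) * ρ t x)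
      MeasureTheory.volume 0 1) :
    (1 / 2) * (∫ t in (0 : ℝ)..1, ∫ x,
          (‖v t x‖ ^ 2 + ‖gradient (fun y => Real.log (ρ t y / ρb y)) x‖ ^ 2) * ρ t x)
        + (∫ x, ρ 1 x * Real.log (ρ 1 x / ρb x))
      ≥ ∫ x, ρ₀ x * Real.log (ρ₀ x / ρb x)
    ∧ ((∀ t ∈ Set.Icc (0 : ℝ) 1, ∀ x,
          v t x = -(gradient (fun y => Real.log (ρ t y / ρb y)) x)) →
        (1 / 2) * (∫ t in (0 : ℝ)..1, ∫ x,
            (‖v t x‖ ^ 2 + ‖gradient (fun y => Real.log (ρ t y / ρb y)) x‖ ^ 2) * ρ t x)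
          + (∫ x, ρ 1 x * Real.log (ρ 1 x / ρb x))
          = ∫ x, ρ₀ x * Real.log (ρ₀ x / ρb x)) := by
  -- notation
  set g : ℝ → EuclideanSpace ℝ (Fin n) → EuclideanSpace ℝ (Fin n) :=
    fun t x => gradient (fun y => Real.log (ρ t y / ρb y)) x with hg
  set H : ℝ → ℝ := fun t => ∫ x, (‖v t x‖ ^ 2 + ‖g t x‖ ^ 2) * ρ t x with hH
  set G : ℝ → ℝ :=
    fun t => ∫ x, deriv (fun s => ρ s x) t * (1 + Real.log (ρ t x / ρb x)) with hG
  set F : ℝ → ℝ := fun s => ∫ x, ρ s x * Real.log (ρ s x / ρb x) with hF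
  -- slice regularity
  have hρt : ∀ t, ContDiff ℝ (⊤ : ℕ∞) (ρ t) := fun t =>
    hρs.comp (ContDiff.prodMk (contDiff_const (c := t)) contDiff_id)
  have hvt : ∀ t, ContDiff ℝ (⊤ : ℕ∞) (v t) := fun t =>
    hvs.comp (ContDiff.prodMk (contDiff_const (c := t)) contDiff_id)
  have hlog : ∀ t, ContDiff ℝ (⊤ : ℕ∞) (fun y => Real.log (ρ t y / ρb y)) := fun t =>
    ((hρt t).div hρbs fun x => (hρbpos x).ne').log
      fun x => (div_pos (hρpos t x) (hρbpos x)).ne'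
  have hgcont : ∀ t, Continuous (g t) := by
    intro t
    exact ((InnerProductSpace.toDual ℝ _).symm.continuous.comp
      ((hlog t).continuous_fderiv (by simp)))
  have hgrad1 : ∀ t x, gradient (fun y => (1 : ℝ) + Real.log (ρ t y / ρb y)) x = g t x := by
    intro t x
    simp [hg, gradient, fderiv_const_add]
  -- pointwise bound
  have hbnd : ∀ t x, |⟪g t x, v t x⟫| * ρ t x ≤ 1/2 * ((‖v t x‖ ^ 2 + ‖g t x‖ ^ 2) * ρ t x) := by
    intro t x
    have h1 : |⟪g t x, v t x⟫| ≤ ‖g t x‖ * ‖v t x‖ := abs_real_inner_le_norm _ _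
    have h2 : ‖g t x‖ * ‖v t x‖ ≤ 1/2 * (‖v t x‖ ^ 2 + ‖g t x‖ ^ 2) := by
      nlinarith [sq_nonneg (‖g t x‖ - ‖v t x‖)]
    calc |⟪g t x, v t x⟫| * ρ t x ≤ (1/2 * (‖v t x‖ ^ 2 + ‖g t x‖ ^ 2)) * ρ t x :=
          mul_le_mul_of_nonneg_right (h1.trans h2) (hρpos t x).le
      _ = 1/2 * ((‖v t x‖ ^ 2 + ‖g t x‖ ^ 2) * ρ t x) := by ring
  have hbnd' : ∀ t x, |⟪g t x, v t x⟫| * ρ t x ≤ (‖v t x‖ ^ 2 + ‖g t x‖ ^ 2) * ρ t x := by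
    intro t x
    have hS : (0:ℝ) ≤ (‖v t x‖ ^ 2 + ‖g t x‖ ^ 2) * ρ t x :=
      mul_nonneg (by positivity) (hρpos t x).le
    linarith [hbnd t x]
  -- integrability facts per t
  have hsum : ∀ t ∈ Set.Icc (0:ℝ) 1,
      Integrable (fun x => (‖v t x‖ ^ 2 + ‖g t x‖ ^ 2) * ρ t x) := by
    intro t ht
    have := (hfin₁ t ht).add (hfin₂ t ht)
    refine this.congr (Filter.Eventually.of_forall fun x => ?_)
    simp [add_mul, hg]
  have hA : ∀ t ∈ Set.Icc (0:ℝ) 1, Integrable (fun x => ⟪g t x, v t x⟫ * ρ t x) := by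
    intro t ht
    refine (hsum t ht).mono ?_ (Filter.Eventually.of_forall fun x => ?_)
    · exact (((hgcont t).inner (hvt t).continuous).mul (hρt t).continuous).aestronglyMeasurable
    · have h0 : (0:ℝ) ≤ (‖v t x‖ ^ 2 + ‖g t x‖ ^ 2) * ρ t x :=
        mul_nonneg (by positivity) (hρpos t x).le
      rw [Real.norm_eq_abs, Real.norm_eq_abs, abs_of_nonneg h0, abs_mul,
        abs_of_nonneg (hρpos t x).le]
      exact hbnd' t x
  -- key identity : G t = ∫ ⟪g, v⟫ ρ
  have hkey : ∀ t ∈ Set.Icc (0:ℝ) 1, G t = ∫ x, ⟪g t x, v t x⟫ * ρ t x := by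
    intro t ht
    have hφd : ∀ x, DifferentiableAt ℝ (fun y => (1:ℝ) + Real.log (ρ t y / ρb y)) x :=
      fun x => ((contDiff_const.add (hlog t)).differentiable (by simp)).differentiableAt
    have hwd : ∀ x, DifferentiableAt ℝ (fun y => ρ t y • v t y) x :=
      fun x => (((hρt t).smul (hvt t)).differentiable (by simp)).differentiableAt
    have hdvd : ∀ x, vdiv (fun y => (1 + Real.log (ρ t y / ρb y)) • (ρ t y • v t y)) x
        = ⟪g t x, v t x⟫ * ρ t x
          + (1 + Real.log (ρ t x / ρb x)) * vdiv (fun y => ρ t y • v t y) x := by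
      intro x
      rw [div_prod _ _ x (hφd x) (hwd x), hgrad1, real_inner_smul_right, mul_comm]
    have hfull := (hbdry t ht).1
    have hBint : Integrable
        (fun x => (1 + Real.log (ρ t x / ρb x)) * vdiv (fun y => ρ t y • v t y) x) := by
      have heq : (fun x => (1 + Real.log (ρ t x / ρb x)) * vdiv (fun y => ρ t y • v t y) x)
          = fun x => vdiv (fun y => (1 + Real.log (ρ t y / ρb y)) • (ρ t y • v t y)) x
            - ⟪g t x, v t x⟫ * ρ t x := by
        funext x; rw [hdvd x]; ring
      rw [heq]
      exact hfull.sub (hA t ht)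
    have hsplit : ∫ x, vdiv (fun y => (1 + Real.log (ρ t y / ρb y)) • (ρ t y • v t y)) x
        = (∫ x, ⟪g t x, v t x⟫ * ρ t x)
          + ∫ x, (1 + Real.log (ρ t x / ρb x)) * vdiv (fun y => ρ t y • v t y) x := by
      rw [← integral_add (hA t ht) hBint]
      exact integral_congr_ae (Filter.Eventually.of_forall fun x => hdvd x)
    have hB0 : ∫ x, (1 + Real.log (ρ t x / ρb x)) * vdiv (fun y => ρ t y • v t y) x
        = -∫ x, ⟪g t x, v t x⟫ * ρ t x := by
      have := (hbdry t ht).2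
      rw [hsplit] at this
      linarith
    have hder : (fun x => deriv (fun s => ρ s x) t * (1 + Real.log (ρ t x / ρb x)))
        = fun x => -((1 + Real.log (ρ t x / ρb x)) * vdiv (fun y => ρ t y • v t y) x) := by
      funext x
      have := hce t ht x
      have hdx : deriv (fun s => ρ s x) t = -(vdiv (fun y => ρ t y • v t y) x) := by linarith
      rw [hdx]; ring
    rw [hG]
    simp only [hder]
    rw [MeasureTheory.integral_neg, hB0, neg_neg]
  -- interval integrability of G
  have huIoc : Set.uIoc (0:ℝ) 1 = Set.Ioc 0 1 := Set.uIoc_of_le zero_le_one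
  have hGae : G =ᵐ[volume.restrict (Set.uIoc (0:ℝ) 1)] deriv F := by
    rw [huIoc]
    refine (ae_restrict_iff' measurableSet_Ioc).2 (Filter.Eventually.of_forall fun t ht => ?_)
    exact ((hDUI t (Set.Ioc_subset_Icc_self ht)).deriv).symm
  have hGaesm : AEStronglyMeasurable G (volume.restrict (Set.uIoc (0:ℝ) 1)) :=
    ((measurable_deriv F).aestronglyMeasurable.restrict).congr hGae.symm
  have hGle : ∀ t ∈ Set.Icc (0:ℝ) 1, |G t| ≤ H t := by
    intro t ht
    rw [hkey t ht]
    have hni := norm_integral_le_integral_norm (μ := volume)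
      (fun x => ⟪g t x, v t x⟫ * ρ t x)
    simp only [Real.norm_eq_abs] at hni
    refine hni.trans ?_
    refine integral_mono (hA t ht).abs (hsum t ht) fun x => ?_
    show |⟪g t x, v t x⟫ * ρ t x| ≤ _
    rw [abs_mul, abs_of_nonneg (hρpos t x).le]
    exact hbnd' t x
  have hGint : IntervalIntegrable G volume 0 1 := by
    refine hfin₃.mono_fun hGaesm ?_
    rw [huIoc]
    refine (ae_restrict_iff' measurableSet_Ioc).2 (Filter.Eventually.of_forall fun t ht => ?_)
    have ht' : t ∈ Set.Icc (0:ℝ) 1 := Set.Ioc_subset_Icc_self ht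
    show ‖G t‖ ≤ ‖_‖
    rw [Real.norm_eq_abs, Real.norm_eq_abs]
    exact (hGle t ht').trans (le_abs_self _)
  -- FTC
  have hFTC : ∫ t in (0:ℝ)..1, G t = F 1 - F 0 :=
    intervalIntegral.integral_eq_sub_of_hasDerivAt
      (fun t ht => hDUI t (by rwa [Set.uIcc_of_le zero_le_one] at ht)) hGint
  -- combination
  have hcomb : ∀ t ∈ Set.Icc (0:ℝ) 1, (1/2) * H t + G t
      = ∫ x, ((1/2) * ((‖v t x‖ ^ 2 + ‖g t x‖ ^ 2) * ρ t x) + ⟪g t x, v t x⟫ * ρ t x) := by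
    intro t ht
    rw [integral_add ((hsum t ht).const_mul _) (hA t ht), MeasureTheory.integral_const_mul, hkey t ht]
  have hnn : ∀ t ∈ Set.Icc (0:ℝ) 1, 0 ≤ (1/2) * H t + G t := by
    intro t ht
    rw [hcomb t ht]
    refine integral_nonneg fun x => ?_
    show (0:ℝ) ≤ 1/2 * ((‖v t x‖ ^ 2 + ‖g t x‖ ^ 2) * ρ t x) + ⟪g t x, v t x⟫ * ρ t x
    have h1 := hbnd t x
    have h2 : -(⟪g t x, v t x⟫ * ρ t x) ≤ |⟪g t x, v t x⟫| * ρ t x := by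
      have := neg_le_abs (⟪g t x, v t x⟫ * ρ t x)
      rwa [abs_mul, abs_of_nonneg (hρpos t x).le] at this
    linarith
  have hIadd : ∫ t in (0:ℝ)..1, ((1/2) * H t + G t)
      = (1/2) * (∫ t in (0:ℝ)..1, H t) + (F 1 - F 0) := by
    rw [intervalIntegral.integral_add (hfin₃.const_mul _) hGint,
      intervalIntegral.integral_const_mul, hFTC]
  have hF0 : F 0 = ∫ x, ρ₀ x * Real.log (ρ₀ x / ρb x) := by
    rw [hF]; simp only [hinit]
  constructor
  · have hpos : 0 ≤ ∫ t in (0:ℝ)..1, ((1/2) * H t + G t) :=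
      intervalIntegral.integral_nonneg zero_le_one hnn
    rw [hIadd, hF0] at hpos
    have : F 1 = ∫ x, ρ 1 x * Real.log (ρ 1 x / ρb x) := rfl
    linarith [hpos]
  · intro hv
    have hzero : ∫ t in (0:ℝ)..1, ((1/2) * H t + G t) = 0 := by
      rw [intervalIntegral.integral_congr (g := fun _ => (0:ℝ)) ?_, intervalIntegral.integral_zero]
      intro t ht
      rw [Set.uIcc_of_le zero_le_one] at ht
      show 1/2 * H t + G t = 0
      rw [hcomb t ht]
      refine integral_eq_zero_of_ae (Filter.Eventually.of_forall fun x => ?_)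
      show 1/2 * ((‖v t x‖ ^ 2 + ‖g t x‖ ^ 2) * ρ t x) + ⟪g t x, v t x⟫ * ρ t x = 0
      have hvx : v t x = -(g t x) := hv t ht x
      rw [hvx, inner_neg_right, real_inner_self_eq_norm_sq, norm_neg]
      ring
    rw [hIadd, hF0] at hzero
    linarith [hzero]
end

section
/- Let ρ̃, ρ : [t₀,t₁] × ℝⁿ → (0,∞) be smooth strictly positive probability densities and ṽ, v smooth vector fields satisfying the continuity equations ∂ρ̃/∂t + ∇·(ṽρ̃) = 0 and ∂ρ/∂t + ∇·(vρ) = 0, with t ↦ D(ρ̃_t‖ρ_t) differentiable via differentiation under the integral sign and the boundary terms at infinity vanishing (∫∇·((1 + log(ρ̃_t/ρ_t)) ṽ_t ρ̃_t) dx = 0 and ∫∇·((ρ̃_t/ρ_t) v_t ρ_t) dx = 0 for each t). Then (d/dt) D(ρ̃_t‖ρ_t) = ∫_{ℝⁿ} ∇log(ρ̃_t(x)/ρ_t(x)) · ( ṽ(t,x) − v(t,x) ) ρ̃_t(x) dx. -/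
open MeasureTheory Real RealInnerProductSpace

section helpers

variable {n : ℕ}

lemma inner_gradient_eq' (f : EuclideanSpace ℝ (Fin n) → ℝ) (x u : EuclideanSpace ℝ (Fin n)) :
    ⟪gradient f x, u⟫ = fderiv ℝ f x u := by
  unfold gradient
  exact InnerProductSpace.toDual_symm_apply

lemma euclidean_decomp' (u : EuclideanSpace ℝ (Fin n)) :
    u = ∑ i, u i • EuclideanSpace.single i 1 := by
  ext j
  rw [WithLp.ofLp_sum, Finset.sum_apply]
  simp [EuclideanSpace.single_apply]

lemma clm_apply_sum' (ℓ : EuclideanSpace ℝ (Fin n) →L[ℝ] ℝ) (u : EuclideanSpace ℝ (Fin n)) :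
    ℓ u = ∑ i, u i * ℓ (EuclideanSpace.single i 1) := by
  conv_lhs => rw [euclidean_decomp' u]
  simp [map_sum]

lemma vdiv_smul_eq' (c : EuclideanSpace ℝ (Fin n) → ℝ)
    (W : EuclideanSpace ℝ (Fin n) → EuclideanSpace ℝ (Fin n)) (x : EuclideanSpace ℝ (Fin n))
    (hc : DifferentiableAt ℝ c x) (hW : DifferentiableAt ℝ W x) :
    vdiv (fun y => c y • W y) x = fderiv ℝ c x (W x) + c x * vdiv W x := by
  unfold vdiv
  rw [fderiv_fun_smul hc hW, clm_apply_sum' (fderiv ℝ c x) (W x)]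
  simp only [ContinuousLinearMap.add_apply, ContinuousLinearMap.smul_apply,
    ContinuousLinearMap.smulRight_apply, PiLp.add_apply, PiLp.smul_apply, smul_eq_mul]
  rw [Finset.sum_add_distrib, Finset.mul_sum, add_comm]
  congr 1
  apply Finset.sum_congr rfl; intros; ring

lemma integral_eq_of_add_integrable {α : Type*} [MeasurableSpace α] {μ : Measure α}
    {f g h : α → ℝ} (hfg : ∀ x, f x = g x + h x) (hh : Integrable h μ)
    (hh0 : ∫ x, h x ∂μ = 0) : ∫ x, f x ∂μ = ∫ x, g x ∂μ := by
  by_cases hg : Integrable g μ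
  · rw [show f = fun x => g x + h x from funext hfg, integral_add hg hh, hh0, add_zero]
  · rw [integral_undef hg, integral_undef]
    intro hf
    exact hg ((hf.sub hh).congr (Filter.Eventually.of_forall fun x => by
      simp [hfg x]))

end helpers

/-- Let `(ρt_s, vt)` and `(ρ_s, v)` be two smooth strictly positive
flows of probability densities on `[t₀,t₁]`, each satisfying its continuity equation.
Under differentiation under the integral sign and vanishing of the boundary terms at
infinity, `(d/dt) D(ρt_t‖ρ_t) = ∫ ∇log(ρt_t/ρ_t) · (vt − v) ρt_t dx`. -/
theorem relEntropy_derivative_velocity_difference {n : ℕ} (t₀ t₁ : ℝ) (ht : t₀ < t₁)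
    (ρt ρ : ℝ → EuclideanSpace ℝ (Fin n) → ℝ)
    (hρts : ContDiff ℝ (⊤ : ℕ∞) (fun p : ℝ × EuclideanSpace ℝ (Fin n) => ρt p.1 p.2))
    (hρs : ContDiff ℝ (⊤ : ℕ∞) (fun p : ℝ × EuclideanSpace ℝ (Fin n) => ρ p.1 p.2))
    (hρtpos : ∀ t x, 0 < ρt t x) (hρpos : ∀ t x, 0 < ρ t x)
    (hρt1 : ∀ t, ∫ x, ρt t x = 1) (hρ1 : ∀ t, ∫ x, ρ t x = 1)
    (vt v : ℝ → EuclideanSpace ℝ (Fin n) → EuclideanSpace ℝ (Fin n))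
    (hvts : ContDiff ℝ (⊤ : ℕ∞) (fun p : ℝ × EuclideanSpace ℝ (Fin n) => vt p.1 p.2))
    (hvs : ContDiff ℝ (⊤ : ℕ∞) (fun p : ℝ × EuclideanSpace ℝ (Fin n) => v p.1 p.2))
    (hcet : ∀ t ∈ Set.Icc t₀ t₁, ∀ x,
      deriv (fun s => ρt s x) t + vdiv (fun y => ρt t y • vt t y) x = 0)
    (hce : ∀ t ∈ Set.Icc t₀ t₁, ∀ x,
      deriv (fun s => ρ s x) t + vdiv (fun y => ρ t y • v t y) x = 0)
    (hDUI : ∀ t ∈ Set.Icc t₀ t₁,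
      HasDerivAt (fun s => ∫ x, ρt s x * Real.log (ρt s x / ρ s x))
        (∫ x, (deriv (fun s => ρt s x) t * (1 + Real.log (ρt t x / ρ t x))
          - deriv (fun s => ρ s x) t * (ρt t x / ρ t x))) t)
    (hbdry₁ : ∀ t ∈ Set.Icc t₀ t₁,
      (Integrable (fun x =>
          vdiv (fun y => (1 + Real.log (ρt t y / ρ t y)) • (ρt t y • vt t y)) x))
        ∧ ∫ x, vdiv (fun y => (1 + Real.log (ρt t y / ρ t y)) • (ρt t y • vt t y)) x = 0)
    (hbdry₂ : ∀ t ∈ Set.Icc t₀ t₁,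
      (Integrable (fun x => vdiv (fun y => (ρt t y / ρ t y) • (ρ t y • v t y)) x))
        ∧ ∫ x, vdiv (fun y => (ρt t y / ρ t y) • (ρ t y • v t y)) x = 0) :
    ∀ t ∈ Set.Icc t₀ t₁,
      HasDerivAt (fun s => ∫ x, ρt s x * Real.log (ρt s x / ρ s x))
        (∫ x, ⟪gradient (fun y => Real.log (ρt t y / ρ t y)) x, vt t x - v t x⟫
          * ρt t x) t := by
  intro t htmem
  -- differentiability of the frozen-time slices
  have hslice : ∀ {α : Type} [NormedAddCommGroup α] [NormedSpace ℝ α]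
      (f : ℝ → EuclideanSpace ℝ (Fin n) → α),
      ContDiff ℝ (⊤ : ℕ∞) (fun p : ℝ × EuclideanSpace ℝ (Fin n) => f p.1 p.2) →
      ContDiff ℝ (⊤ : ℕ∞) (fun y => f t y) := by
    intro α _ _ f hf
    exact hf.comp (contDiff_const.prodMk contDiff_id)
  have ha : ContDiff ℝ (⊤ : ℕ∞) (fun y => ρt t y) := hslice ρt hρts
  have hb : ContDiff ℝ (⊤ : ℕ∞) (fun y => ρ t y) := hslice ρ hρs
  have hVt : ContDiff ℝ (⊤ : ℕ∞) (fun y => vt t y) := hslice vt hvts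
  have hVv : ContDiff ℝ (⊤ : ℕ∞) (fun y => v t y) := hslice v hvs
  have hq : ∀ x, DifferentiableAt ℝ (fun y => ρt t y / ρ t y) x := by
    intro x
    have hax : DifferentiableAt ℝ (fun y => ρt t y) x := ha.differentiable (by simp) x
    have hbx : DifferentiableAt ℝ (fun y => ρ t y) x := hb.differentiable (by simp) x
    have heq : (fun y => ρt t y / ρ t y) = fun y => ρt t y * (ρ t y)⁻¹ := by
      funext y; rw [div_eq_mul_inv]
    rw [heq]
    exact hax.mul (hbx.inv (hρpos t x).ne')
  have hqpos : ∀ x, 0 < ρt t x / ρ t x := fun x => div_pos (hρtpos t x) (hρpos t x)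
  have hL : ∀ x, HasFDerivAt (fun y => Real.log (ρt t y / ρ t y))
      ((ρt t x / ρ t x)⁻¹ • fderiv ℝ (fun y => ρt t y / ρ t y) x) x := fun x =>
    by have := (Real.hasDerivAt_log (ne_of_gt (hqpos x))).comp_hasFDerivAt x (hq x).hasFDerivAt; exact this
  -- the pointwise identity
  have key : ∀ x,
      deriv (fun s => ρt s x) t * (1 + Real.log (ρt t x / ρ t x))
        - deriv (fun s => ρ s x) t * (ρt t x / ρ t x)
      = ⟪gradient (fun y => Real.log (ρt t y / ρ t y)) x, vt t x - v t x⟫ * ρt t x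
        + (vdiv (fun y => (ρt t y / ρ t y) • (ρ t y • v t y)) x
           - vdiv (fun y => (1 + Real.log (ρt t y / ρ t y)) • (ρt t y • vt t y)) x) := by
    intro x
    have hdt : deriv (fun s => ρt s x) t = -vdiv (fun y => ρt t y • vt t y) x := by
      have := hcet t htmem x; linarith
    have hd : deriv (fun s => ρ s x) t = -vdiv (fun y => ρ t y • v t y) x := by
      have := hce t htmem x; linarith
    have hWt : DifferentiableAt ℝ (fun y => ρt t y • vt t y) x :=
      (ha.differentiable (by simp) x).smul (hVt.differentiable (by simp) x)
    have hWv : DifferentiableAt ℝ (fun y => ρ t y • v t y) x :=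
      (hb.differentiable (by simp) x).smul (hVv.differentiable (by simp) x)
    have hLd : DifferentiableAt ℝ (fun y => Real.log (ρt t y / ρ t y)) x :=
      (hL x).differentiableAt
    have hc1 : DifferentiableAt ℝ (fun y => 1 + Real.log (ρt t y / ρ t y)) x :=
      (differentiableAt_const 1).add hLd
    have e1 : vdiv (fun y => (1 + Real.log (ρt t y / ρ t y)) • (ρt t y • vt t y)) x
        = fderiv ℝ (fun y => 1 + Real.log (ρt t y / ρ t y)) x (ρt t x • vt t x)
          + (1 + Real.log (ρt t x / ρ t x)) * vdiv (fun y => ρt t y • vt t y) x :=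
      vdiv_smul_eq' _ _ x hc1 hWt
    have e2 : vdiv (fun y => (ρt t y / ρ t y) • (ρ t y • v t y)) x
        = fderiv ℝ (fun y => ρt t y / ρ t y) x (ρ t x • v t x)
          + (ρt t x / ρ t x) * vdiv (fun y => ρ t y • v t y) x :=
      vdiv_smul_eq' _ _ x (hq x) hWv
    have e3 : fderiv ℝ (fun y => 1 + Real.log (ρt t y / ρ t y)) x
        = fderiv ℝ (fun y => Real.log (ρt t y / ρ t y)) x := fderiv_const_add _
    have e4 : fderiv ℝ (fun y => Real.log (ρt t y / ρ t y)) x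
        = (ρt t x / ρ t x)⁻¹ • fderiv ℝ (fun y => ρt t y / ρ t y) x := (hL x).fderiv
    rw [inner_gradient_eq', hdt, hd, e1, e2, e3, e4]
    simp only [ContinuousLinearMap.smul_apply, smul_eq_mul, map_sub, _root_.map_smul]
    set A := fderiv ℝ (fun y => ρt t y / ρ t y) x (vt t x)
    set B := fderiv ℝ (fun y => ρt t y / ρ t y) x (v t x)
    have hapos := hρtpos t x
    have hbpos := hρpos t x
    field_simp
    ring
  -- rewrite the integral
  have hb1 := hbdry₁ t htmem
  have hb2 := hbdry₂ t htmem
  have hh : Integrable (fun x =>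
      vdiv (fun y => (ρt t y / ρ t y) • (ρ t y • v t y)) x
        - vdiv (fun y => (1 + Real.log (ρt t y / ρ t y)) • (ρt t y • vt t y)) x) :=
    hb2.1.sub hb1.1
  have hh0 : ∫ x, (vdiv (fun y => (ρt t y / ρ t y) • (ρ t y • v t y)) x
        - vdiv (fun y => (1 + Real.log (ρt t y / ρ t y)) • (ρt t y • vt t y)) x) = 0 := by
    rw [integral_sub hb2.1 hb1.1, hb2.2, hb1.2, sub_zero]
  have heq : (∫ x, (deriv (fun s => ρt s x) t * (1 + Real.log (ρt t x / ρ t x))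
          - deriv (fun s => ρ s x) t * (ρt t x / ρ t x)))
      = ∫ x, ⟪gradient (fun y => Real.log (ρt t y / ρ t y)) x, vt t x - v t x⟫ * ρt t x :=
    integral_eq_of_add_integrable key hh hh0
  exact heq ▸ hDUI t htmem
end
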